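/- Let V be a finite nonempty set and let Φ^0, Φ^1 : V → V be fixed-point-free involutions. Define M = ([0,1] × V) / ∼, where ∼ is the equivalence relation generated by (0, v) ∼ (0, Φ^0(v)) and (1, v) ∼ (1, Φ^1(v)). Then M is a compact topological 1-manifold without boundary, i.e., a finite disjoint union of circles. -/
import Mathlib

open Function


/-- The gluing relation on `[0,1] × V`: at an endpoint ε of the interval, `v`
is identified with `Φ^ε v`. -/
def glueRel {V : Type*} (Φ0 Φ1 : V → V) :
    (Set.Icc (0 : ℝ) 1) × V → (Set.Icc (0 : ℝ) 1) × V → Prop :=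
  fun p q => p.1 = q.1 ∧
    (((p.1 : ℝ) = 0 ∧ q.2 = Φ0 p.2) ∨ ((p.1 : ℝ) = 1 ∧ q.2 = Φ1 p.2))

/-- The quotient topology on the glued space. -/
instance glueTop {V : Type*} (Φ0 Φ1 : V → V) :
    TopologicalSpace (Quot (glueRel Φ0 Φ1)) :=
  letI : TopologicalSpace V := ⊥
  TopologicalSpace.coinduced (Quot.mk _) inferInstance


section Aux
variable {V : Type*} (Φ0 Φ1 : V → V)

variable (h0inv : Function.Involutive Φ0) (h1inv : Function.Involutive Φ1)

/-- One step around a glued circle: traverse interval `v` in direction `d`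
(`true` = upward), then move to the next interval. -/
def glueStep : Equiv.Perm (V × Bool) where
  toFun x := (cond x.2 (Φ1 x.1) (Φ0 x.1), !x.2)
  invFun x := (cond x.2 (Φ0 x.1) (Φ1 x.1), !x.2)
  left_inv := by rintro ⟨v, b⟩; cases b <;> simp [h0inv v, h1inv v]
  right_inv := by rintro ⟨v, b⟩; cases b <;> simp [h0inv v, h1inv v]

/-- The "same interval, same direction" involution. -/
def flipStep : V × Bool → V × Bool := fun x => (cond x.2 (Φ1 x.1) (Φ0 x.1), x.2)

lemma glueStep_apply (x : V × Bool) :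
    glueStep Φ0 Φ1 h0inv h1inv x = (cond x.2 (Φ1 x.1) (Φ0 x.1), !x.2) := rfl

lemma flip_glue (z : V × Bool) :
    glueStep Φ0 Φ1 h0inv h1inv (flipStep Φ0 Φ1 (glueStep Φ0 Φ1 h0inv h1inv z)) = flipStep Φ0 Φ1 z := by
  obtain ⟨v, b⟩ := z
  cases b <;> simp [glueStep, flipStep, h0inv _, h1inv _]

lemma glue_eq_flip (z : V × Bool) :
    glueStep Φ0 Φ1 h0inv h1inv z = ((flipStep Φ0 Φ1 z).1, !z.2) := rfl

variable {Φ0 Φ1} in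
lemma flipStep_ne (h0 : ∀ v, Φ0 v ≠ v) (h1 : ∀ v, Φ1 v ≠ v) (x : V × Bool) :
    flipStep Φ0 Φ1 x ≠ x := by
  obtain ⟨v, b⟩ := x
  cases b <;> simp [flipStep] <;> [exact h0 v; exact h1 v]

variable {Φ0 Φ1} in
/-- The key dihedral lemma: no power of `glueStep` composed with `flipStep` has a
fixed point. -/
lemma lemA' (h0 : ∀ v, Φ0 v ≠ v) (h1 : ∀ v, Φ1 v ≠ v) :
    ∀ (m : ℕ) (x : V × Bool),
      flipStep Φ0 Φ1 ((glueStep Φ0 Φ1 h0inv h1inv ^ m) x) ≠ x := by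
  intro m
  induction m using Nat.strong_induction_on with
  | _ m ih =>
    match m with
    | 0 =>
      intro x h
      rw [pow_zero] at h
      exact flipStep_ne h0 h1 x h
    | 1 =>
      intro x h
      have h2 := congrArg Prod.snd h
      rw [pow_one] at h2
      simp [flipStep, glueStep] at h2
    | (m+2) =>
      intro x h
      set π := glueStep Φ0 Φ1 h0inv h1inv with hπ
      have e1 : (π ^ (m+2)) x = π ((π ^ m) (π x)) := by
        rw [pow_succ, Equiv.Perm.mul_apply, pow_succ', Equiv.Perm.mul_apply]
      rw [e1] at h
      have h2 : π (flipStep Φ0 Φ1 (π ((π ^ m) (π x)))) = π x := by rw [h]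
      rw [flip_glue Φ0 Φ1 h0inv h1inv ((π ^ m) (π x))] at h2
      exact ih m (by omega) (π x) h2

variable {Φ0 Φ1} in
lemma lemA (h0 : ∀ v, Φ0 v ≠ v) (h1 : ∀ v, Φ1 v ≠ v) :
    ∀ (n : ℕ) (x : V × Bool), (glueStep Φ0 Φ1 h0inv h1inv ^ n) x ≠ (x.1, !x.2) := by
  intro n x h
  match n with
  | 0 =>
    rw [pow_zero] at h
    have := congrArg Prod.snd h
    simp at this
  | (m+1) =>
    set π := glueStep Φ0 Φ1 h0inv h1inv with hπ
    have e1 : (π ^ (m+1)) x = π ((π ^ m) x) := by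
      rw [pow_succ', Equiv.Perm.mul_apply]
    rw [e1, glue_eq_flip] at h
    rw [Prod.ext_iff] at h
    have h1' : (flipStep Φ0 Φ1 ((π ^ m) x)).1 = x.1 := h.1
    have h3 : ((π ^ m) x).2 = x.2 := by simpa using h.2
    have h4 : (flipStep Φ0 Φ1 ((π ^ m) x)).2 = x.2 := by
      simpa [flipStep] using h3
    exact lemA' h0inv h1inv h0 h1 m x (Prod.ext h1' h4)


/-- The direction-reversing involution, as a permutation. -/
def dirFlip : Equiv.Perm (V × Bool) where
  toFun x := (x.1, !x.2)
  invFun x := (x.1, !x.2)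
  left_inv := by rintro ⟨v, b⟩; simp
  right_inv := by rintro ⟨v, b⟩; simp

lemma dirFlip_conj :
    dirFlip (V := V) * glueStep Φ0 Φ1 h0inv h1inv * (dirFlip (V := V))⁻¹
      = (glueStep Φ0 Φ1 h0inv h1inv)⁻¹ := by
  refine Equiv.ext fun x => ?_
  obtain ⟨v, b⟩ := x
  cases b <;> rfl

lemma sc_flip {x y : V × Bool}
    (h : (glueStep Φ0 Φ1 h0inv h1inv).SameCycle x y) :
    (glueStep Φ0 Φ1 h0inv h1inv).SameCycle (x.1, !x.2) (y.1, !y.2) := by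
  have h2 := h.conj (g := dirFlip (V := V))
  rw [dirFlip_conj, Equiv.Perm.sameCycle_inv] at h2
  exact h2

variable {Φ0 Φ1} in
lemma sc_not_flip [Finite V] (h0 : ∀ v, Φ0 v ≠ v) (h1 : ∀ v, Φ1 v ≠ v) (x : V × Bool) :
    ¬ (glueStep Φ0 Φ1 h0inv h1inv).SameCycle x (x.1, !x.2) := by
  intro h
  obtain ⟨i, -, hi⟩ := h.exists_pow_eq'
  exact lemA h0inv h1inv h0 h1 i x hi

/-- Two intervals lie in the same glued circle. -/
def glueComp (v w : V) : Prop :=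
  (glueStep Φ0 Φ1 h0inv h1inv).SameCycle (v, true) (w, true) ∨
    (glueStep Φ0 Φ1 h0inv h1inv).SameCycle (v, true) (w, false)

/-- The setoid of components. -/
def compSetoid : Setoid V where
  r := glueComp Φ0 Φ1 h0inv h1inv
  iseqv := by
    constructor
    · intro v; exact Or.inl (Equiv.Perm.SameCycle.refl _ _)
    · rintro v w (h | h)
      · exact Or.inl h.symm
      · have := (sc_flip Φ0 Φ1 h0inv h1inv h).symm
        exact Or.inr this
    · rintro v w u (h | h) (h' | h')
      · exact Or.inl (h.trans h')
      · exact Or.inr (h.trans h')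
      · have := sc_flip Φ0 Φ1 h0inv h1inv h'
        exact Or.inr (h.trans this)
      · have := sc_flip Φ0 Φ1 h0inv h1inv h'
        exact Or.inl (h.trans this)


section Quant
variable [Fintype V]

lemma glue_periodic (x : V × Bool) :
    Function.IsPeriodicPt (⇑(glueStep Φ0 Φ1 h0inv h1inv))
      (orderOf (glueStep Φ0 Φ1 h0inv h1inv)) x := by
  set π := glueStep Φ0 Φ1 h0inv h1inv
  unfold Function.IsPeriodicPt Function.IsFixedPt
  rw [← Equiv.Perm.coe_pow, pow_orderOf_eq_one]
  rfl

lemma glue_order_pos : 0 < orderOf (glueStep Φ0 Φ1 h0inv h1inv) := orderOf_pos _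

lemma glue_minper_pos (x : V × Bool) :
    0 < Function.minimalPeriod (⇑(glueStep Φ0 Φ1 h0inv h1inv)) x :=
  (glue_periodic Φ0 Φ1 h0inv h1inv x).minimalPeriod_pos (glue_order_pos Φ0 Φ1 h0inv h1inv)

lemma glue_pow_eq_iff {a b : ℕ} (x : V × Bool) :
    ((glueStep Φ0 Φ1 h0inv h1inv) ^ a) x = ((glueStep Φ0 Φ1 h0inv h1inv) ^ b) x ↔
      a ≡ b [MOD Function.minimalPeriod (⇑(glueStep Φ0 Φ1 h0inv h1inv)) x] := by
  set π := glueStep Φ0 Φ1 h0inv h1inv with hπ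
  set L := Function.minimalPeriod (⇑π) x with hL
  constructor
  · intro h
    rcases le_total a b with hab | hab
    · have h1 : (π ^ (b - a)) ((π ^ a) x) = (π ^ b) x := by
        rw [← Equiv.Perm.mul_apply, ← pow_add, Nat.sub_add_cancel hab]
      have h2 : (π ^ a) ((π ^ (b - a)) x) = (π ^ a) x := by
        rw [← Equiv.Perm.mul_apply, pow_mul_comm, Equiv.Perm.mul_apply, h1, h]
      have h3 : (π ^ (b - a)) x = x := (π ^ a).injective h2
      have h4 : Function.IsPeriodicPt (⇑π) (b - a) x := by
        unfold Function.IsPeriodicPt Function.IsFixedPt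
        rw [← Equiv.Perm.coe_pow]
        exact h3
      exact (Nat.modEq_iff_dvd' hab).mpr h4.minimalPeriod_dvd
    · have h1 : (π ^ (a - b)) ((π ^ b) x) = (π ^ a) x := by
        rw [← Equiv.Perm.mul_apply, ← pow_add, Nat.sub_add_cancel hab]
      have h2 : (π ^ b) ((π ^ (a - b)) x) = (π ^ b) x := by
        rw [← Equiv.Perm.mul_apply, pow_mul_comm, Equiv.Perm.mul_apply, h1, ← h]
      have h3 : (π ^ (a - b)) x = x := (π ^ b).injective h2
      have h4 : Function.IsPeriodicPt (⇑π) (a - b) x := by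
        unfold Function.IsPeriodicPt Function.IsFixedPt
        rw [← Equiv.Perm.coe_pow]
        exact h3
      exact ((Nat.modEq_iff_dvd' hab).mpr h4.minimalPeriod_dvd).symm
  · intro h
    have e1 : (π ^ a) x = (π ^ (a % L)) x :=
      ((Function.iterate_mod_minimalPeriod_eq (f := ⇑π) (x := x) (n := a))).symm
    have e2 : (π ^ b) x = (π ^ (b % L)) x :=
      ((Function.iterate_mod_minimalPeriod_eq (f := ⇑π) (x := x) (n := b))).symm
    rw [e1, e2, h]

end Quant


section Main
variable [Fintype V]
open scoped Classical

/-- Component of an interval. -/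
noncomputable def gcmp (v : V) : Quotient (compSetoid Φ0 Φ1 h0inv h1inv) :=
  Quotient.mk (compSetoid Φ0 Φ1 h0inv h1inv) v

/-- Base point of a component. -/
noncomputable def basept (c : Quotient (compSetoid Φ0 Φ1 h0inv h1inv)) : V × Bool :=
  (c.out, true)

/-- The length (number of intervals) of a component. -/
noncomputable def per (c : Quotient (compSetoid Φ0 Φ1 h0inv h1inv)) : ℕ :=
  Function.minimalPeriod (⇑(glueStep Φ0 Φ1 h0inv h1inv)) (basept Φ0 Φ1 h0inv h1inv c)

lemma per_pos (c : Quotient (compSetoid Φ0 Φ1 h0inv h1inv)) :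
    0 < per Φ0 Φ1 h0inv h1inv c :=
  glue_minper_pos Φ0 Φ1 h0inv h1inv _

lemma per_ne_zero (c : Quotient (compSetoid Φ0 Φ1 h0inv h1inv)) :
    ((per Φ0 Φ1 h0inv h1inv c : ℝ)) ≠ 0 :=
  Nat.cast_ne_zero.mpr (per_pos Φ0 Φ1 h0inv h1inv c).ne'

/-- The direction in which interval `v` is traversed in its component. -/
noncomputable def dirOf (c : Quotient (compSetoid Φ0 Φ1 h0inv h1inv)) (v : V) : Bool :=
  if (glueStep Φ0 Φ1 h0inv h1inv).SameCycle (basept Φ0 Φ1 h0inv h1inv c) (v, true)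
    then true else false

/-- A chosen exponent taking `x` to `y` along the cycle. -/
noncomputable def gexpOf (x y : V × Bool) : ℕ :=
  if h : ∃ n : ℕ, ((glueStep Φ0 Φ1 h0inv h1inv) ^ n) x = y then h.choose else 0

lemma expOf_spec {x y : V × Bool} (h : (glueStep Φ0 Φ1 h0inv h1inv).SameCycle x y) :
    ((glueStep Φ0 Φ1 h0inv h1inv) ^ (gexpOf Φ0 Φ1 h0inv h1inv x y)) x = y := by
  obtain ⟨i, -, hi⟩ := h.exists_pow_eq'
  have hex : ∃ n : ℕ, ((glueStep Φ0 Φ1 h0inv h1inv) ^ n) x = y := ⟨i, hi⟩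
  rw [gexpOf, dif_pos hex]
  exact hex.choose_spec

lemma sc_of_nat {x y : V × Bool} {n : ℕ}
    (h : ((glueStep Φ0 Φ1 h0inv h1inv) ^ n) x = y) :
    (glueStep Φ0 Φ1 h0inv h1inv).SameCycle x y :=
  ⟨(n : ℤ), by rw [zpow_natCast]; exact h⟩

lemma dir_spec (v : V) :
    (glueStep Φ0 Φ1 h0inv h1inv).SameCycle
      (basept Φ0 Φ1 h0inv h1inv (gcmp Φ0 Φ1 h0inv h1inv v))
      (v, dirOf Φ0 Φ1 h0inv h1inv (gcmp Φ0 Φ1 h0inv h1inv v) v) := by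
  set c := gcmp Φ0 Φ1 h0inv h1inv v with hc
  have hout : glueComp Φ0 Φ1 h0inv h1inv c.out v := by
    have := Quotient.mk_out (s := compSetoid Φ0 Φ1 h0inv h1inv) v
    exact this
  rw [dirOf]
  split
  · next h => exact h
  · next h =>
    rcases hout with h' | h'
    · exact absurd h' h
    · exact h'

lemma cmp_eq_of_sc {c : Quotient (compSetoid Φ0 Φ1 h0inv h1inv)} {v : V} {d : Bool}
    (h : (glueStep Φ0 Φ1 h0inv h1inv).SameCycle (basept Φ0 Φ1 h0inv h1inv c) (v, d)) :
    gcmp Φ0 Φ1 h0inv h1inv v = c := by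
  have h2 : glueComp Φ0 Φ1 h0inv h1inv c.out v := by
    cases d
    · exact Or.inr h
    · exact Or.inl h
  have h2' : (compSetoid Φ0 Φ1 h0inv h1inv).r v c.out :=
    (compSetoid Φ0 Φ1 h0inv h1inv).iseqv.symm h2
  have h3 : gcmp Φ0 Φ1 h0inv h1inv v = Quotient.mk _ c.out :=
    Quotient.sound h2'
  rw [h3, Quotient.out_eq]

variable {Φ0 Φ1} in
lemma dir_unique (h0 : ∀ v, Φ0 v ≠ v) (h1 : ∀ v, Φ1 v ≠ v)
    {c : Quotient (compSetoid Φ0 Φ1 h0inv h1inv)} {v : V} {d : Bool}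
    (h : (glueStep Φ0 Φ1 h0inv h1inv).SameCycle (basept Φ0 Φ1 h0inv h1inv c) (v, d)) :
    dirOf Φ0 Φ1 h0inv h1inv c v = d := by
  cases d
  · rw [dirOf]
    split
    · next h' =>
      exfalso
      have := (h'.symm.trans h)
      exact sc_not_flip h0inv h1inv h0 h1 (v, true) this
    · rfl
  · rw [dirOf, if_pos h]

/-- Adjusted parameter: position along the traversal of the interval. -/
def tAdj (d : Bool) (t : Set.Icc (0:ℝ) 1) : ℝ := cond d (t : ℝ) (1 - (t : ℝ))

lemma tAdj_mem (d : Bool) (t : Set.Icc (0:ℝ) 1) :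
    0 ≤ tAdj d t ∧ tAdj d t ≤ 1 := by
  obtain ⟨ht0, ht1⟩ := t.2
  cases d <;> simp [tAdj] <;> constructor <;> linarith

lemma tAdj_inj (d : Bool) {t s : Set.Icc (0:ℝ) 1} (h : tAdj d t = tAdj d s) : t = s := by
  cases d
  · have h' : 1 - (t:ℝ) = 1 - (s:ℝ) := h
    exact Subtype.ext (by linarith)
  · exact Subtype.ext h

lemma addCircle_coe_eq {L : ℕ} {x y : ℝ} (h : ∃ z : ℤ, x - y = z * L) :
    ((x : AddCircle (L : ℝ))) = ((y : AddCircle (L : ℝ))) := by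
  obtain ⟨z, hz⟩ := h
  rw [QuotientAddGroup.eq_iff_sub_mem]
  refine ⟨z, ?_⟩
  show z • (L : ℝ) = x - y
  rw [zsmul_eq_mul]
  exact hz.symm

lemma modEq_real {L A B : ℕ} (h : A ≡ B [MOD L]) :
    ∃ z : ℤ, (A : ℝ) - (B : ℝ) = z * L := by
  obtain ⟨z, hz⟩ := (Nat.modEq_iff_dvd.mp h)
  refine ⟨-z, ?_⟩
  have : (A : ℤ) - B = -z * L := by rw [neg_mul]; rw [mul_comm] at hz; omega
  exact_mod_cast congrArg (fun i : ℤ => (i : ℝ)) this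

/-- The circle coordinate on component `c` at real parameter `r`. -/
noncomputable def circCoord (c : Quotient (compSetoid Φ0 Φ1 h0inv h1inv)) (r : ℝ) : Circle :=
  AddCircle.homeomorphCircle (per_ne_zero Φ0 Φ1 h0inv h1inv c)
    ((r : AddCircle ((per Φ0 Φ1 h0inv h1inv c : ℕ) : ℝ)))

lemma circCoord_congr {c : Quotient (compSetoid Φ0 Φ1 h0inv h1inv)} {r r' : ℝ}
    (h : ∃ z : ℤ, r - r' = z * (per Φ0 Φ1 h0inv h1inv c : ℕ)) :
    circCoord Φ0 Φ1 h0inv h1inv c r = circCoord Φ0 Φ1 h0inv h1inv c r' := by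
  unfold circCoord
  exact congrArg _ (addCircle_coe_eq h)

lemma circCoord_inj {c : Quotient (compSetoid Φ0 Φ1 h0inv h1inv)} {r r' : ℝ}
    (h : circCoord Φ0 Φ1 h0inv h1inv c r = circCoord Φ0 Φ1 h0inv h1inv c r') :
    ∃ z : ℤ, r - r' = z * (per Φ0 Φ1 h0inv h1inv c : ℕ) := by
  have h2 := (AddCircle.homeomorphCircle
      (per_ne_zero Φ0 Φ1 h0inv h1inv c)).injective h
  rw [QuotientAddGroup.eq_iff_sub_mem] at h2
  obtain ⟨z, hz⟩ := h2
  refine ⟨z, ?_⟩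
  rw [← hz]
  show z • ((per Φ0 Φ1 h0inv h1inv c : ℕ) : ℝ) = _
  rw [zsmul_eq_mul]

/-- The classifying map to (component, circle coordinate). -/
noncomputable def glueF (p : Set.Icc (0:ℝ) 1 × V) :
    Quotient (compSetoid Φ0 Φ1 h0inv h1inv) × Circle :=
  (gcmp Φ0 Φ1 h0inv h1inv p.2,
    circCoord Φ0 Φ1 h0inv h1inv (gcmp Φ0 Φ1 h0inv h1inv p.2)
      (((gexpOf Φ0 Φ1 h0inv h1inv
            (basept Φ0 Φ1 h0inv h1inv (gcmp Φ0 Φ1 h0inv h1inv p.2))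
            (p.2, dirOf Φ0 Φ1 h0inv h1inv (gcmp Φ0 Φ1 h0inv h1inv p.2) p.2) : ℕ) : ℝ)
          + tAdj (dirOf Φ0 Φ1 h0inv h1inv (gcmp Φ0 Φ1 h0inv h1inv p.2) p.2) p.1))

variable {Φ0 Φ1} in
lemma glueF_step (h0 : ∀ v, Φ0 v ≠ v) (h1 : ∀ v, Φ1 v ≠ v)
    {v w : V} {t s : Set.Icc (0:ℝ) 1}
    (hw : (glueStep Φ0 Φ1 h0inv h1inv)
        (v, dirOf Φ0 Φ1 h0inv h1inv (gcmp Φ0 Φ1 h0inv h1inv v) v)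
      = (w, !(dirOf Φ0 Φ1 h0inv h1inv (gcmp Φ0 Φ1 h0inv h1inv v) v)))
    (ht : tAdj (dirOf Φ0 Φ1 h0inv h1inv (gcmp Φ0 Φ1 h0inv h1inv v) v) t = 1)
    (hs : tAdj (!(dirOf Φ0 Φ1 h0inv h1inv (gcmp Φ0 Φ1 h0inv h1inv v) v)) s = 0) :
    glueF Φ0 Φ1 h0inv h1inv (t, v) = glueF Φ0 Φ1 h0inv h1inv (s, w) := by
  set π := glueStep Φ0 Φ1 h0inv h1inv with hπdef
  set c := gcmp Φ0 Φ1 h0inv h1inv v with hcdef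
  set d := dirOf Φ0 Φ1 h0inv h1inv c v with hddef
  have hv : π.SameCycle (basept Φ0 Φ1 h0inv h1inv c) (v, d) :=
    dir_spec Φ0 Φ1 h0inv h1inv v
  have hA := expOf_spec Φ0 Φ1 h0inv h1inv hv
  set A := gexpOf Φ0 Φ1 h0inv h1inv (basept Φ0 Φ1 h0inv h1inv c) (v, d) with hAdef
  have hw1 : (π ^ (A + 1)) (basept Φ0 Φ1 h0inv h1inv c) = (w, !d) := by
    rw [pow_succ', Equiv.Perm.mul_apply, hA, hw]
  have hSCw : π.SameCycle (basept Φ0 Φ1 h0inv h1inv c) (w, !d) :=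
    sc_of_nat Φ0 Φ1 h0inv h1inv hw1
  have hcw : gcmp Φ0 Φ1 h0inv h1inv w = c := cmp_eq_of_sc Φ0 Φ1 h0inv h1inv hSCw
  have hdw : dirOf Φ0 Φ1 h0inv h1inv c w = !d := dir_unique h0inv h1inv h0 h1 hSCw
  have hB := expOf_spec Φ0 Φ1 h0inv h1inv hSCw
  set B := gexpOf Φ0 Φ1 h0inv h1inv (basept Φ0 Φ1 h0inv h1inv c) (w, !d) with hBdef
  have hmod : B ≡ A + 1 [MOD per Φ0 Φ1 h0inv h1inv c] :=
    (glue_pow_eq_iff Φ0 Φ1 h0inv h1inv _).mp (hB.trans hw1.symm)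
  simp only [glueF]
  refine Prod.ext hcw.symm ?_
  show circCoord Φ0 Φ1 h0inv h1inv c _
      = circCoord Φ0 Φ1 h0inv h1inv (gcmp Φ0 Φ1 h0inv h1inv w) _
  rw [hcw, hdw]
  refine circCoord_congr Φ0 Φ1 h0inv h1inv ?_
  obtain ⟨z, hz⟩ := modEq_real hmod
  refine ⟨-z, ?_⟩
  rw [ht, hs]
  push_cast at hz ⊢
  linarith

variable {Φ0 Φ1} in
lemma quot_step {v w : V} {d e : Bool} {t s : Set.Icc (0:ℝ) 1}
    (hπ : (glueStep Φ0 Φ1 h0inv h1inv) (v, d) = (w, e))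
    (ht : tAdj d t = 1) (hs : tAdj e s = 0) :
    Quot.mk (glueRel Φ0 Φ1) (t, v) = Quot.mk (glueRel Φ0 Φ1) (s, w) := by
  cases d
  · -- d = false : t' = 1 - t = 1, so t = 0 ; w = Φ0 v, e = true, s = 0
    have hw : w = Φ0 v := by
      have := congrArg Prod.fst hπ
      simpa [glueStep] using this.symm
    have he : e = true := by
      have := congrArg Prod.snd hπ
      simpa [glueStep] using this.symm
    subst he
    have ht0 : 1 - (t : ℝ) = 1 := ht
    have ht' : (t : ℝ) = 0 := by linarith
    have hs' : (s : ℝ) = 0 := hs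
    refine Quot.sound ⟨Subtype.ext (by rw [ht', hs']), Or.inl ⟨ht', hw⟩⟩
  · -- d = true : t = 1 ; w = Φ1 v, e = false, 1 - s = 0 so s = 1
    have hw : w = Φ1 v := by
      have := congrArg Prod.fst hπ
      simpa [glueStep] using this.symm
    have he : e = false := by
      have := congrArg Prod.snd hπ
      simpa [glueStep] using this.symm
    subst he
    have ht' : (t : ℝ) = 1 := ht
    have hs0 : 1 - (s : ℝ) = 0 := hs
    have hs' : (s : ℝ) = 1 := by linarith
    refine Quot.sound ⟨Subtype.ext (by rw [ht', hs']), Or.inr ⟨ht', hw⟩⟩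

variable {Φ0 Φ1} in
lemma glueF_sound (h0 : ∀ v, Φ0 v ≠ v) (h1 : ∀ v, Φ1 v ≠ v)
    {p q : Set.Icc (0:ℝ) 1 × V} (h : glueRel Φ0 Φ1 p q) :
    glueF Φ0 Φ1 h0inv h1inv p = glueF Φ0 Φ1 h0inv h1inv q := by
  obtain ⟨t, v⟩ := p
  obtain ⟨s, w⟩ := q
  obtain ⟨hts, hor⟩ := h
  replace hts : t = s := hts
  subst hts
  rcases hor with ⟨ht0, hw⟩ | ⟨ht1, hw⟩
  · -- t = 0, w = Φ0 v
    replace ht0 : (t : ℝ) = 0 := ht0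
    replace hw : w = Φ0 v := hw
    subst hw
    rcases hdv : dirOf Φ0 Φ1 h0inv h1inv (gcmp Φ0 Φ1 h0inv h1inv v) v with _ | _
    · -- v is traversed downward: direct step v → Φ0 v
      refine glueF_step h0inv h1inv h0 h1 ?_ ?_ ?_ <;> rw [hdv]
      · simp [glueStep]
      · show 1 - (t : ℝ) = 1
        rw [ht0]; ring
      · exact ht0
    · -- reversed step Φ0 v → v
      have hv : (glueStep Φ0 Φ1 h0inv h1inv).SameCycle
          (basept Φ0 Φ1 h0inv h1inv (gcmp Φ0 Φ1 h0inv h1inv v)) (v, true) := by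
        have := dir_spec Φ0 Φ1 h0inv h1inv v
        rwa [hdv] at this
      have hstep : (glueStep Φ0 Φ1 h0inv h1inv) (Φ0 v, false) = (v, true) := by
        simp [glueStep, h0inv v]
      have hSCw : (glueStep Φ0 Φ1 h0inv h1inv).SameCycle
          (basept Φ0 Φ1 h0inv h1inv (gcmp Φ0 Φ1 h0inv h1inv v)) (Φ0 v, false) :=
        hv.trans (sc_of_nat Φ0 Φ1 h0inv h1inv (n := 1) (by simpa using hstep)).symm
      have hcw : gcmp Φ0 Φ1 h0inv h1inv (Φ0 v) = gcmp Φ0 Φ1 h0inv h1inv v :=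
        cmp_eq_of_sc Φ0 Φ1 h0inv h1inv hSCw
      have hdw : dirOf Φ0 Φ1 h0inv h1inv (gcmp Φ0 Φ1 h0inv h1inv v) (Φ0 v) = false :=
        dir_unique h0inv h1inv h0 h1 hSCw
      refine (glueF_step h0inv h1inv h0 h1 (v := Φ0 v) (w := v) (t := t) (s := t)
        ?_ ?_ ?_).symm <;> rw [hcw, hdw]
      · simpa using hstep
      · show 1 - (t : ℝ) = 1
        rw [ht0]; ring
      · exact ht0
  · -- t = 1, w = Φ1 v
    replace ht1 : (t : ℝ) = 1 := ht1
    replace hw : w = Φ1 v := hw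
    subst hw
    rcases hdv : dirOf Φ0 Φ1 h0inv h1inv (gcmp Φ0 Φ1 h0inv h1inv v) v with _ | _
    · -- reversed step Φ1 v → v
      have hv : (glueStep Φ0 Φ1 h0inv h1inv).SameCycle
          (basept Φ0 Φ1 h0inv h1inv (gcmp Φ0 Φ1 h0inv h1inv v)) (v, false) := by
        have := dir_spec Φ0 Φ1 h0inv h1inv v
        rwa [hdv] at this
      have hstep : (glueStep Φ0 Φ1 h0inv h1inv) (Φ1 v, true) = (v, false) := by
        simp [glueStep, h1inv v]
      have hSCw : (glueStep Φ0 Φ1 h0inv h1inv).SameCycle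
          (basept Φ0 Φ1 h0inv h1inv (gcmp Φ0 Φ1 h0inv h1inv v)) (Φ1 v, true) :=
        hv.trans (sc_of_nat Φ0 Φ1 h0inv h1inv (n := 1) (by simpa using hstep)).symm
      have hcw : gcmp Φ0 Φ1 h0inv h1inv (Φ1 v) = gcmp Φ0 Φ1 h0inv h1inv v :=
        cmp_eq_of_sc Φ0 Φ1 h0inv h1inv hSCw
      have hdw : dirOf Φ0 Φ1 h0inv h1inv (gcmp Φ0 Φ1 h0inv h1inv v) (Φ1 v) = true :=
        dir_unique h0inv h1inv h0 h1 hSCw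
      refine (glueF_step h0inv h1inv h0 h1 (v := Φ1 v) (w := v) (t := t) (s := t)
        ?_ ?_ ?_).symm <;> rw [hcw, hdw]
      · simpa using hstep
      · exact ht1
      · show 1 - (t : ℝ) = 0
        rw [ht1]; ring
    · -- direct step v → Φ1 v
      refine glueF_step h0inv h1inv h0 h1 ?_ ?_ ?_ <;> rw [hdv]
      · simp [glueStep]
      · exact ht1
      · show 1 - (t : ℝ) = 0
        rw [ht1]; ring

variable {Φ0 Φ1} in
lemma glueF_inj (h0 : ∀ v, Φ0 v ≠ v) (h1 : ∀ v, Φ1 v ≠ v)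
    {p q : Set.Icc (0:ℝ) 1 × V} (h : glueF Φ0 Φ1 h0inv h1inv p = glueF Φ0 Φ1 h0inv h1inv q) :
    Quot.mk (glueRel Φ0 Φ1) p = Quot.mk (glueRel Φ0 Φ1) q := by
  obtain ⟨t, v⟩ := p
  obtain ⟨s, w⟩ := q
  have hc : gcmp Φ0 Φ1 h0inv h1inv w = gcmp Φ0 Φ1 h0inv h1inv v :=
    (congrArg Prod.fst h).symm
  have h2 := congrArg Prod.snd h
  simp only [glueF] at h2
  rw [hc] at h2
  set π := glueStep Φ0 Φ1 h0inv h1inv with hπdef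
  set c := gcmp Φ0 Φ1 h0inv h1inv v with hcdef
  set d := dirOf Φ0 Φ1 h0inv h1inv c v with hddef
  set e := dirOf Φ0 Φ1 h0inv h1inv c w with hedef
  have hv : π.SameCycle (basept Φ0 Φ1 h0inv h1inv c) (v, d) :=
    dir_spec Φ0 Φ1 h0inv h1inv v
  have hw : π.SameCycle (basept Φ0 Φ1 h0inv h1inv c) (w, e) := by
    have := dir_spec Φ0 Φ1 h0inv h1inv w
    rwa [hc] at this
  have hA := expOf_spec Φ0 Φ1 h0inv h1inv hv
  have hB := expOf_spec Φ0 Φ1 h0inv h1inv hw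
  set A := gexpOf Φ0 Φ1 h0inv h1inv (basept Φ0 Φ1 h0inv h1inv c) (v, d) with hAdef
  set B := gexpOf Φ0 Φ1 h0inv h1inv (basept Φ0 Φ1 h0inv h1inv c) (w, e) with hBdef
  set P := per Φ0 Φ1 h0inv h1inv c with hPdef
  obtain ⟨z, hz⟩ := circCoord_inj Φ0 Φ1 h0inv h1inv h2
  obtain ⟨ht1, ht2⟩ := tAdj_mem d t
  obtain ⟨hs1, hs2⟩ := tAdj_mem e s
  set M : ℤ := z * (P : ℤ) - (A : ℤ) + (B : ℤ) with hMdef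
  have hM : (M : ℝ) = tAdj d t - tAdj e s := by
    rw [hMdef]
    push_cast
    linarith [hz]
  have hM3 : M = -1 ∨ M = 0 ∨ M = 1 := by
    have e1 : (M : ℝ) ≤ 1 := by linarith
    have e2 : (-1 : ℝ) ≤ (M : ℝ) := by linarith
    have e1' : M ≤ 1 := by exact_mod_cast e1
    have e2' : -1 ≤ M := by exact_mod_cast e2
    omega
  rcases hM3 with hM3 | hM3 | hM3
  · -- (v,d) = π (w,e), with tAdj e s = 1, tAdj d t = 0
    have hts : tAdj e s = 1 ∧ tAdj d t = 0 := by
      rw [hM3] at hM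
      push_cast at hM
      constructor <;> linarith
    have hmod : (B + 1) ≡ A [MOD P] := by
      refine Nat.modEq_iff_dvd.mpr ⟨z, ?_⟩
      have : (A : ℤ) - (B + 1) = (P : ℤ) * z := by
        rw [hMdef] at hM3
        linarith [hM3]
      push_cast
      linarith [this]
    have hπAB : (π ^ (B + 1)) (basept Φ0 Φ1 h0inv h1inv c)
        = (π ^ A) (basept Φ0 Φ1 h0inv h1inv c) :=
      (glue_pow_eq_iff Φ0 Φ1 h0inv h1inv _).mpr hmod
    have hπw : π (w, e) = (v, d) := by
      rw [← hA, ← hπAB, pow_succ', Equiv.Perm.mul_apply, hB]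
    exact (quot_step h0inv h1inv hπw hts.1 hts.2).symm
  · -- same point
    have hts : tAdj d t = tAdj e s := by
      rw [hM3] at hM
      push_cast at hM
      linarith
    have hmod : A ≡ B [MOD P] := by
      refine Nat.modEq_iff_dvd.mpr ⟨-z, ?_⟩
      have : (B : ℤ) - A = (P : ℤ) * (-z) := by
        rw [hMdef] at hM3
        ring_nf
        ring_nf at hM3
        linarith [hM3]
      exact this
    have hπAB : (π ^ A) (basept Φ0 Φ1 h0inv h1inv c)
        = (π ^ B) (basept Φ0 Φ1 h0inv h1inv c) :=
      (glue_pow_eq_iff Φ0 Φ1 h0inv h1inv _).mpr hmod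
    have hvw : (v, d) = ((w, e) : V × Bool) := by rw [← hA, ← hB, hπAB]
    have hvw1 : v = w := (Prod.ext_iff.mp hvw).1
    have hvw2 : d = e := (Prod.ext_iff.mp hvw).2
    have hts' : t = s := by
      rw [← hvw2] at hts
      exact tAdj_inj d hts
    rw [hvw1, hts']
  · -- (w,e) = π (v,d), with tAdj d t = 1, tAdj e s = 0
    have hts : tAdj d t = 1 ∧ tAdj e s = 0 := by
      rw [hM3] at hM
      push_cast at hM
      constructor <;> linarith
    have hmod : (A + 1) ≡ B [MOD P] := by
      refine Nat.modEq_iff_dvd.mpr ⟨-z, ?_⟩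
      have : (B : ℤ) - (A + 1) = (P : ℤ) * (-z) := by
        rw [hMdef] at hM3
        ring_nf
        ring_nf at hM3
        linarith [hM3]
      exact this
    have hπAB : (π ^ (A + 1)) (basept Φ0 Φ1 h0inv h1inv c)
        = (π ^ B) (basept Φ0 Φ1 h0inv h1inv c) :=
      (glue_pow_eq_iff Φ0 Φ1 h0inv h1inv _).mpr hmod
    have hπv : π (v, d) = (w, e) := by
      rw [← hB, ← hπAB, pow_succ', Equiv.Perm.mul_apply, hA]
    exact quot_step h0inv h1inv hπv hts.1 hts.2

variable {Φ0 Φ1} in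
lemma glueF_surj (h0 : ∀ v, Φ0 v ≠ v) (h1 : ∀ v, Φ1 v ≠ v) :
    Function.Surjective (glueF Φ0 Φ1 h0inv h1inv) := by
  rintro ⟨c, z⟩
  set π := glueStep Φ0 Φ1 h0inv h1inv with hπdef
  set P := per Φ0 Φ1 h0inv h1inv c with hPdef
  have hP0 : (0 : ℝ) < (P : ℝ) := by
    exact_mod_cast per_pos Φ0 Φ1 h0inv h1inv c
  haveI : Fact ((0:ℝ) < (P : ℝ)) := ⟨hP0⟩
  obtain ⟨q, hq⟩ := (AddCircle.homeomorphCircle (per_ne_zero Φ0 Φ1 h0inv h1inv c)).surjective z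
  set u := AddCircle.equivIco (P : ℝ) 0 q with hu
  have hq2 : (((u : ℝ) : ℝ) : AddCircle ((P : ℕ) : ℝ)) = q := by
    have := (AddCircle.equivIco (P : ℝ) 0).symm_apply_apply q
    rw [← hu] at this
    exact this
  obtain ⟨hr0, hrP0⟩ := u.2
  have hrP : ((u : ℝ)) < (P : ℝ) := by linarith
  set r : ℝ := (u : ℝ) with hrdef
  set n : ℕ := ⌊r⌋.toNat with hndef
  have hn : (n : ℝ) = ⌊r⌋ := by
    rw [hndef]
    exact_mod_cast Int.toNat_of_nonneg (Int.floor_nonneg.mpr hr0)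
  have htt0 : 0 ≤ r - n := by
    rw [hn]
    linarith [Int.floor_le r]
  have htt1 : r - n < 1 := by
    rw [hn]
    linarith [Int.lt_floor_add_one r]
  set t₀ : ℝ := r - n with ht₀def
  rcases hxe : (π ^ n) (basept Φ0 Φ1 h0inv h1inv c) with ⟨v, d⟩
  have hSC : π.SameCycle (basept Φ0 Φ1 h0inv h1inv c) (v, d) :=
    sc_of_nat Φ0 Φ1 h0inv h1inv hxe
  have hcv : gcmp Φ0 Φ1 h0inv h1inv v = c := cmp_eq_of_sc Φ0 Φ1 h0inv h1inv hSC
  have hdv : dirOf Φ0 Φ1 h0inv h1inv c v = d := dir_unique h0inv h1inv h0 h1 hSC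
  have hA := expOf_spec Φ0 Φ1 h0inv h1inv hSC
  set A := gexpOf Φ0 Φ1 h0inv h1inv (basept Φ0 Φ1 h0inv h1inv c) (v, d) with hAdef
  have hAn : A ≡ n [MOD P] :=
    (glue_pow_eq_iff Φ0 Φ1 h0inv h1inv _).mp (hA.trans hxe.symm)
  have hmem : cond d t₀ (1 - t₀) ∈ Set.Icc (0:ℝ) 1 := by
    cases d <;> constructor <;> simp <;> linarith
  set tI : Set.Icc (0:ℝ) 1 := ⟨cond d t₀ (1 - t₀), hmem⟩ with htIdef
  have htAdj : tAdj d tI = t₀ := by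
    cases d
    · show 1 - (1 - t₀) = t₀
      ring
    · rfl
  refine ⟨(tI, v), ?_⟩
  · simp only [glueF]
    rw [Prod.ext_iff]
    constructor
    · exact hcv
    · show circCoord Φ0 Φ1 h0inv h1inv (gcmp Φ0 Φ1 h0inv h1inv v) _ = z
      simp only [hcv, hdv]
      have step1 : circCoord Φ0 Φ1 h0inv h1inv c ((A : ℝ) + tAdj d tI)
          = circCoord Φ0 Φ1 h0inv h1inv c r := by
        refine circCoord_congr Φ0 Φ1 h0inv h1inv ?_
        rw [htAdj]
        obtain ⟨zz, hzz⟩ := modEq_real hAn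
        refine ⟨zz, ?_⟩
        rw [ht₀def]
        push_cast at hzz ⊢
        linarith
      rw [step1]
      show AddCircle.homeomorphCircle _ _ = z
      rw [← hq]
      exact congrArg _ hq2

end Main

end Aux

lemma continuous_prod_discrete {X Y Z : Type*} [TopologicalSpace X] [TopologicalSpace Y]
    [DiscreteTopology Y] [TopologicalSpace Z] (f : X × Y → Z)
    (hf : ∀ y, Continuous fun x => f (x, y)) : Continuous f := by
  rw [continuous_iff_continuousAt]
  rintro ⟨x, y⟩
  unfold ContinuousAt
  rw [nhds_prod_eq, nhds_discrete Y, Filter.prod_pure, Filter.tendsto_map'_iff]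
  exact (hf y).tendsto x

/-- For fixed-point-free involutions Φ^0, Φ^1 of a finite nonempty
set V, the quotient M = ([0,1] × V)/∼ is a finite disjoint union of circles
(hence a compact 1-manifold without boundary). -/
theorem stmt_6 {V : Type*} [Fintype V] [Nonempty V] (Φ0 Φ1 : V → V)
    (h0inv : Function.Involutive Φ0) (h1inv : Function.Involutive Φ1)
    (h0 : ∀ v, Φ0 v ≠ v) (h1 : ∀ v, Φ1 v ≠ v) :
    ∃ k : ℕ, Nonempty (Quot (glueRel Φ0 Φ1) ≃ₜ (Fin k × Circle)) := by
  classical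
  letI : TopologicalSpace V := ⊥
  haveI : DiscreteTopology V := ⟨rfl⟩
  haveI : Finite (Quotient (compSetoid Φ0 Φ1 h0inv h1inv)) := Quotient.finite _
  haveI := Fintype.ofFinite (Quotient (compSetoid Φ0 Φ1 h0inv h1inv))
  letI : TopologicalSpace (Quotient (compSetoid Φ0 Φ1 h0inv h1inv)) := ⊥
  haveI : DiscreteTopology (Quotient (compSetoid Φ0 Φ1 h0inv h1inv)) := ⟨rfl⟩
  refine ⟨Fintype.card (Quotient (compSetoid Φ0 Φ1 h0inv h1inv)), ⟨?_⟩⟩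
  -- the induced map on the quotient
  let Fbar : Quot (glueRel Φ0 Φ1) → Quotient (compSetoid Φ0 Φ1 h0inv h1inv) × Circle :=
    Quot.lift (glueF Φ0 Φ1 h0inv h1inv)
      (fun p q h => glueF_sound h0inv h1inv h0 h1 h)
  -- continuity of glueF
  have hF : Continuous (glueF Φ0 Φ1 h0inv h1inv) := by
    apply continuous_prod_discrete
    intro v
    refine Continuous.prodMk (continuous_const : Continuous fun _ : Set.Icc (0:ℝ) 1 =>
      gcmp Φ0 Φ1 h0inv h1inv v) ?_
    show Continuous fun t => circCoord Φ0 Φ1 h0inv h1inv (gcmp Φ0 Φ1 h0inv h1inv v)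
      (((gexpOf Φ0 Φ1 h0inv h1inv
            (basept Φ0 Φ1 h0inv h1inv (gcmp Φ0 Φ1 h0inv h1inv v))
            (v, dirOf Φ0 Φ1 h0inv h1inv (gcmp Φ0 Φ1 h0inv h1inv v) v) : ℕ) : ℝ)
          + tAdj (dirOf Φ0 Φ1 h0inv h1inv (gcmp Φ0 Φ1 h0inv h1inv v) v) t)
    unfold circCoord
    refine ((AddCircle.homeomorphCircle _).continuous).comp ?_
    refine (AddCircle.continuous_mk' _).comp ?_
    have htA : Continuous fun t : Set.Icc (0:ℝ) 1 =>
        tAdj (dirOf Φ0 Φ1 h0inv h1inv (gcmp Φ0 Φ1 h0inv h1inv v) v) t := by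
      cases dirOf Φ0 Φ1 h0inv h1inv (gcmp Φ0 Φ1 h0inv h1inv v) v
      · exact continuous_const.sub continuous_subtype_val
      · exact continuous_subtype_val
    exact continuous_const.add htA
  have hcont : Continuous Fbar := continuous_coinduced_dom.mpr hF
  -- bijectivity
  have hinj : Function.Injective Fbar := by
    intro a b
    induction a using Quot.ind with
    | _ p =>
      induction b using Quot.ind with
      | _ q =>
        intro h
        exact glueF_inj h0inv h1inv h0 h1 h
  have hsurj : Function.Surjective Fbar := by
    intro y
    obtain ⟨p, hp⟩ := glueF_surj h0inv h1inv h0 h1 y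
    exact ⟨Quot.mk _ p, hp⟩
  -- compactness and Hausdorff
  haveI : CompactSpace (Quot (glueRel Φ0 Φ1)) := by
    constructor
    have hqm : Continuous (Quot.mk (glueRel Φ0 Φ1)) := continuous_coinduced_rng
    have himg : (Set.univ : Set (Quot (glueRel Φ0 Φ1)))
        = Quot.mk (glueRel Φ0 Φ1) '' Set.univ := by
      rw [Set.image_univ]
      have hs : Function.Surjective (Quot.mk (glueRel Φ0 Φ1)) := fun y => Quot.exists_rep y
      exact hs.range_eq.symm
    rw [himg]
    exact isCompact_univ.image hqm
  let E : Quot (glueRel Φ0 Φ1) ≃ Quotient (compSetoid Φ0 Φ1 h0inv h1inv) × Circle :=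
    Equiv.ofBijective Fbar ⟨hinj, hsurj⟩
  have hcontE : Continuous E := hcont
  let H1 := hcontE.homeoOfEquivCompactToT2
  let H2 : Quotient (compSetoid Φ0 Φ1 h0inv h1inv)
      ≃ₜ Fin (Fintype.card (Quotient (compSetoid Φ0 Φ1 h0inv h1inv))) :=
    { Fintype.equivFin (Quotient (compSetoid Φ0 Φ1 h0inv h1inv)) with
      continuous_toFun := continuous_of_discreteTopology
      continuous_invFun := continuous_of_discreteTopology }
  exact H1.trans (H2.prodCongr (Homeomorph.refl Circle))
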